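/- arXiv:1509.00606 — 3 statements merged into one kernel-verified Lean document; each statement's English description precedes it below -/
import Mathlib

section
/- Let V be a vector space over a field K, let ∂, u be endomorphisms of V with ∂∘u − u∘∂ = id, and let a, b, c, d ∈ K with ad − bc ≠ 0. Assume the endomorphism x := a·id − c·∂ is invertible. Then the endomorphisms ∂' := (d·∂ − b·id)∘x⁻¹ and u' := (ad−bc)⁻¹·x²∘u again satisfy the commutation relation ∂'∘u' − u'∘∂' = id. -/
theorem stmt_8 (K : Type*) [Field K] (V : Type*) [AddCommGroup V] [Module K V]
    (D u : Module.End K V) (h : D * u - u * D = 1) (a b c d : K)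
    (hdet : a * d - b * c ≠ 0)
    (hx : IsUnit (a • (1 : Module.End K V) - c • D)) :
    ((d • D - b • (1 : Module.End K V)) * (↑hx.unit⁻¹ : Module.End K V)) *
        ((a * d - b * c)⁻¹ • ((a • (1 : Module.End K V) - c • D) ^ 2 * u))
      - ((a * d - b * c)⁻¹ • ((a • (1 : Module.End K V) - c • D) ^ 2 * u)) *
          ((d • D - b • (1 : Module.End K V)) * (↑hx.unit⁻¹ : Module.End K V)) = 1 := by
  set X : Module.End K V := a • (1 : Module.End K V) - c • D with hXdef
  set Y : Module.End K V := d • D - b • (1 : Module.End K V) with hYdef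
  set E : Module.End K V := (↑hx.unit⁻¹ : Module.End K V) with hEdef
  have hDu : D * u = u * D + 1 := by rw [← h]; abel
  have hXE : X * E = 1 := by
    rw [hEdef]; exact_mod_cast hx.unit.mul_inv
  have hEX : E * X = 1 := by
    rw [hEdef]; exact_mod_cast hx.unit.inv_mul
  have hXD : X * D = D * X := by
    simp [hXdef, sub_mul, mul_sub, smul_mul_assoc, mul_smul_comm]
  have hXY : X * Y = Y * X := by
    simp [hXdef, hYdef, sub_mul, mul_sub, smul_mul_assoc, mul_smul_comm, smul_smul]
    module
  have hED : E * D = D * E := by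
    calc E * D = E * D * (X * E) := by rw [hXE, mul_one]
    _ = E * (D * X) * E := by simp only [mul_assoc]
    _ = E * (X * D) * E := by rw [← hXD]
    _ = (E * X) * (D * E) := by simp only [mul_assoc]
    _ = D * E := by rw [hEX, one_mul]
  have hEY : Y * E = E * Y := by
    simp only [hYdef, sub_mul, mul_sub, smul_mul_assoc, mul_smul_comm, one_mul, mul_one, hED]
  have hXu : X * u = u * X - c • 1 := by
    simp only [hXdef, sub_mul, mul_sub, smul_mul_assoc, mul_smul_comm, one_mul, hDu]
    simp [mul_sub, smul_add, smul_sub]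
    module
  have hYu : u * Y = Y * u - d • 1 := by
    simp only [hYdef, sub_mul, mul_sub, smul_mul_assoc, mul_smul_comm, one_mul, mul_one, hDu]
    simp [smul_add]
    module
  have huE : u * E = E * u - c • (E * E) := by
    calc u * E = (E * X) * u * E := by rw [hEX, one_mul]
    _ = E * (X * u) * E := by simp only [mul_assoc]
    _ = E * (u * X - c • 1) * E := by rw [hXu]
    _ = E * u * (X * E) - c • (E * E) := by
        simp only [mul_sub, sub_mul, mul_smul_comm, smul_mul_assoc, mul_one, one_mul, mul_assoc]
    _ = E * u - c • (E * E) := by rw [hXE, mul_one]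
  have hEX2 : E * X ^ 2 = X := by rw [sq, ← mul_assoc, hEX, one_mul]
  have hX2E : X ^ 2 * E = X := by rw [sq, mul_assoc, hXE, mul_one]
  have P1 : Y * E * (X ^ 2 * u) = Y * u * X - c • Y := by
    calc Y * E * (X ^ 2 * u) = Y * (E * X ^ 2) * u := by simp only [mul_assoc]
    _ = Y * (X * u) := by rw [hEX2, mul_assoc]
    _ = Y * (u * X - c • 1) := by rw [hXu]
    _ = Y * u * X - c • Y := by
        simp only [mul_sub, mul_smul_comm, mul_one, mul_assoc]
  have P2 : (X ^ 2 * u) * (Y * E) = X * Y * u - c • Y - d • X := by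
    calc (X ^ 2 * u) * (Y * E) = X ^ 2 * ((u * Y) * E) := by simp only [mul_assoc]
    _ = X ^ 2 * ((Y * u - d • 1) * E) := by rw [hYu]
    _ = X ^ 2 * (Y * (u * E)) - d • (X ^ 2 * E) := by
        simp only [sub_mul, mul_sub, smul_mul_assoc, mul_smul_comm, one_mul, mul_assoc]
    _ = X ^ 2 * (Y * (E * u - c • (E * E))) - d • X := by rw [huE, hX2E]
    _ = X ^ 2 * ((Y * E) * u) - c • (X ^ 2 * ((Y * E) * E)) - d • X := by
        simp only [mul_sub, mul_smul_comm, mul_assoc]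
    _ = X ^ 2 * ((E * Y) * u) - c • (X ^ 2 * ((E * Y) * E)) - d • X := by rw [hEY]
    _ = (X ^ 2 * E) * (Y * u) - c • ((X ^ 2 * E) * (Y * E)) - d • X := by
        simp only [mul_assoc]
    _ = X * (Y * u) - c • (X * (E * Y)) - d • X := by rw [hX2E, hEY]
    _ = X * Y * u - c • ((X * E) * Y) - d • X := by simp only [mul_assoc]
    _ = X * Y * u - c • Y - d • X := by rw [hXE, one_mul]
  have hYXu : X * Y * u = Y * u * X - c • Y := by
    rw [hXY, mul_assoc, hXu, mul_sub, mul_smul_comm, mul_one, ← mul_assoc]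
  have key : Y * E * (X ^ 2 * u) - (X ^ 2 * u) * (Y * E) = (a * d - b * c) • 1 := by
    rw [P1, P2, hYXu]
    trans (c • Y + d • X)
    · abel
    · rw [hXdef, hYdef]; module
  calc Y * E * ((a * d - b * c)⁻¹ • (X ^ 2 * u)) - (a * d - b * c)⁻¹ • (X ^ 2 * u) * (Y * E)
      = (a * d - b * c)⁻¹ • (Y * E * (X ^ 2 * u) - (X ^ 2 * u) * (Y * E)) := by
        simp only [mul_smul_comm, smul_mul_assoc, smul_sub]
  _ = (a * d - b * c)⁻¹ • ((a * d - b * c) • (1 : Module.End K V)) := by rw [key]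
  _ = 1 := by rw [smul_smul, inv_mul_cancel₀ hdet, one_smul]
end

section
/- Let A be a commutative ring, P ∈ A[X] a polynomial, and B = A[X]/(P). Let f ∈ B denote the image of X and assume P'(f) is a unit in B. Then every derivation d: A → A extends uniquely to a derivation D: B → B satisfying D(a·1) = d(a)·1 for all a ∈ A; necessarily D(f) = −P'(f)⁻¹·Pᵈ(f), where Pᵈ is the coefficient-wise application of d to P. -/
/-!
Every derivation `D` of an `A`-algebra extending `d` satisfies the chain rule
`D (Q(x)) = Qᵈ(x) + Q'(x) · D x`. For `x = f` and `Q = P` this reads `0 = Pᵈ(f) + P'(f) · D f`,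
which pins down `D f` once `P'(f)` is a unit, and hence `D`, as `f` generates `B`. Conversely,
if `v` lifts `-P'(f)⁻¹ Pᵈ(f)`, the derivation `Q ↦ Qᵈ + v Q'` of `A[X]` maps `P`, hence by the
Leibniz rule the whole ideal `(P)`, into `(P)`, so it descends to `B`.
-/

open Polynomial

namespace Derivation

def ofAddLeibniz {A : Type*} [CommRing A] (d : A → A)
    (hadd : ∀ x y, d (x + y) = d x + d y) (hleib : ∀ x y, d (x * y) = x * d y + d x * y) :
    Derivation ℤ A A :=
  mk' (AddMonoidHom.mk' d hadd).toIntLinearMap fun a b ↦ by simp [hleib, mul_comm]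

variable {R A : Type*} [CommRing R] [CommRing A] [Algebra R A] (d : Derivation R A A)

noncomputable def polyMapCoeffs : Derivation R A[X] A[X] :=
  PolynomialModule.equivPolynomialSelf.compDer d.mapCoeffs

@[simp]
lemma coeff_polyMapCoeffs (p : A[X]) (n : ℕ) :
    (d.polyMapCoeffs p).coeff n = d (p.coeff n) := rfl

@[simp]
lemma polyMapCoeffs_monomial (n : ℕ) (a : A) :
    d.polyMapCoeffs (monomial n a) = monomial n (d a) := by
  ext k; simp [coeff_monomial, apply_ite d]

@[simp]
lemma polyMapCoeffs_C (a : A) : d.polyMapCoeffs (C a) = C (d a) := by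
  simp [← monomial_zero_left]

lemma aeval_polyMapCoeffs {B : Type*} [CommRing B] [Algebra A B] (x : B) (p : A[X]) :
    aeval x (d.polyMapCoeffs p) = p.sum fun n a => algebraMap A B (d a) * x ^ n := by
  induction p using Polynomial.induction_on' with
  | add p q hp hq => rw [map_add, map_add, hp, hq, sum_add_index] <;> simp [add_mul]
  | monomial n a => simp [sum_monomial_index]

noncomputable def extendPolynomial (v : A[X]) : Derivation R A[X] A[X] :=
  d.polyMapCoeffs + v • derivative'.restrictScalars R

lemma extendPolynomial_apply (v p : A[X]) :
    d.extendPolynomial v p = d.polyMapCoeffs p + v * derivative p := rfl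

variable {B : Type*} [CommRing B] [Algebra R B] [Algebra A B]

theorem apply_aeval_eq_polyMapCoeffs (D : Derivation R B B)
    (hD : ∀ a, D (algebraMap A B a) = algebraMap A B (d a)) (x : B) (p : A[X]) :
    D (aeval x p) = aeval x (d.polyMapCoeffs p) + aeval x (derivative p) * D x := by
  induction p using Polynomial.induction_on' with
  | add p q hp hq => simp only [map_add, hp, hq]; ring
  | monomial n a =>
    simp only [polyMapCoeffs_monomial, derivative_monomial, aeval_monomial, leibniz, leibniz_pow,
      hD, map_mul, _root_.map_natCast, smul_eq_mul, nsmul_eq_mul]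
    ring

theorem aeval_derivative_mul_apply_eq_neg {P : A[X]} {x : B} (hx : aeval x P = 0)
    (D : Derivation R B B) (hD : ∀ a, D (algebraMap A B a) = algebraMap A B (d a)) :
    aeval x (derivative P) * D x = -aeval x (d.polyMapCoeffs P) := by
  have := d.apply_aeval_eq_polyMapCoeffs D hD x P
  rw [hx, map_zero] at this
  linear_combination -this

end Derivation

namespace IsAdjoinRoot

variable {R A S : Type*} [CommRing R] [CommRing A] [Algebra R A] [CommRing S] [Algebra A S]
  {P : A[X]} (h : IsAdjoinRoot S P) (d : Derivation R A A)

noncomputable def derivationValueAtRoot (hu : IsUnit (aeval h.root (derivative P))) : S :=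
  -(↑hu.unit⁻¹ * aeval h.root (d.polyMapCoeffs P))

lemma map_extendPolynomial (v q : A[X]) :
    h.map (d.extendPolynomial v q) =
      aeval h.root (d.polyMapCoeffs q) + aeval h.root (derivative q) * h.map v := by
  rw [Derivation.extendPolynomial_apply, map_add, map_mul, mul_comm, h.aeval_root_eq_map]

lemma map_extendPolynomial_eq_zero (hu : IsUnit (aeval h.root (derivative P))) {q : A[X]}
    (hq : h.map q = 0) :
    h.map (d.extendPolynomial (h.repr (h.derivationValueAtRoot d hu)) q) = 0 := by
  obtain ⟨s, rfl⟩ := h.map_eq_zero_iff.mp hq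
  have hP : h.map (d.extendPolynomial (h.repr (h.derivationValueAtRoot d hu)) P) = 0 := by
    rw [map_extendPolynomial, h.map_repr, derivationValueAtRoot]
    linear_combination -aeval h.root (d.polyMapCoeffs P) * hu.val_inv_mul
  simp [hP]

variable [Algebra R S]

theorem derivation_apply_root (hu : IsUnit (aeval h.root (derivative P))) (D : Derivation R S S)
    (hD : ∀ a, D (algebraMap A S a) = algebraMap A S (d a)) :
    D h.root = h.derivationValueAtRoot d hu := by
  have := d.aeval_derivative_mul_apply_eq_neg h.aeval_root_self D hD
  rw [derivationValueAtRoot]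
  linear_combination ↑hu.unit⁻¹ * this - D h.root * hu.val_inv_mul

theorem derivation_ext {D₁ D₂ : Derivation R S S}
    (hD₁ : ∀ a, D₁ (algebraMap A S a) = algebraMap A S (d a))
    (hD₂ : ∀ a, D₂ (algebraMap A S a) = algebraMap A S (d a)) (hroot : D₁ h.root = D₂ h.root) :
    D₁ = D₂ := by
  ext s
  obtain ⟨p, rfl⟩ := h.map_surjective s
  rw [← h.aeval_root_eq_map, d.apply_aeval_eq_polyMapCoeffs D₁ hD₁,
    d.apply_aeval_eq_polyMapCoeffs D₂ hD₂, hroot]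

variable [IsScalarTower R A S] (hu : IsUnit (aeval h.root (derivative P)))

noncomputable def extendDerivation : Derivation R S S :=
  Derivation.liftOfSurjective (f := h.map.restrictScalars R) h.map_surjective
    fun _ ↦ h.map_extendPolynomial_eq_zero d hu

theorem extendDerivation_algebraMap (a : A) :
    h.extendDerivation d hu (algebraMap A S a) = algebraMap A S (d a) := by
  rw [h.algebraMap_apply, h.algebraMap_apply]
  exact (Derivation.liftOfSurjective_apply (f := h.map.restrictScalars R) h.map_surjective
    (fun _ ↦ h.map_extendPolynomial_eq_zero d hu) (C a)).trans
    (by simp [Derivation.extendPolynomial_apply])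

end IsAdjoinRoot

theorem stmt_13 (A : Type*) [CommRing A] (P : Polynomial A)
    (hP : IsUnit (Polynomial.aeval
      (Ideal.Quotient.mk (Ideal.span {P}) Polynomial.X) (Polynomial.derivative P)))
    (d : A → A)
    (hadd : ∀ x y : A, d (x + y) = d x + d y)
    (hleib : ∀ x y : A, d (x * y) = x * d y + d x * y) :
    (∃! D : (Polynomial A ⧸ Ideal.span {P}) → (Polynomial A ⧸ Ideal.span {P}),
      (∀ x y, D (x + y) = D x + D y) ∧
      (∀ x y, D (x * y) = x * D y + D x * y) ∧
      (∀ a : A, D (algebraMap A (Polynomial A ⧸ Ideal.span {P}) a) =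
        algebraMap A (Polynomial A ⧸ Ideal.span {P}) (d a))) ∧
    (∀ D : (Polynomial A ⧸ Ideal.span {P}) → (Polynomial A ⧸ Ideal.span {P}),
      ((∀ x y, D (x + y) = D x + D y) ∧
       (∀ x y, D (x * y) = x * D y + D x * y) ∧
       (∀ a : A, D (algebraMap A (Polynomial A ⧸ Ideal.span {P}) a) =
         algebraMap A (Polynomial A ⧸ Ideal.span {P}) (d a))) →
      D (Ideal.Quotient.mk (Ideal.span {P}) Polynomial.X) =
        -((↑hP.unit⁻¹ : Polynomial A ⧸ Ideal.span {P}) *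
          P.sum (fun n a => algebraMap A (Polynomial A ⧸ Ideal.span {P}) (d a) *
            (Ideal.Quotient.mk (Ideal.span {P}) Polynomial.X) ^ n))) := by
  let h : IsAdjoinRoot (A[X] ⧸ Ideal.span {P}) P := AdjoinRoot.isAdjoinRoot P
  let dA := Derivation.ofAddLeibniz d hadd hleib
  let E := h.extendDerivation dA hP
  have hE := h.extendDerivation_algebraMap dA hP
  have hE_mul (x y) : E (x * y) = x * E y + E x * y := by
    rw [E.leibniz, smul_eq_mul, smul_eq_mul, mul_comm y]
  refine ⟨⟨E, ⟨map_add E, hE_mul, hE⟩, ?_⟩, ?_⟩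
  · rintro D ⟨hD₁, hD₂, hD₃⟩
    have hroot := (h.derivation_apply_root dA hP (.ofAddLeibniz D hD₁ hD₂) hD₃).trans
      (h.derivation_apply_root dA hP E hE).symm
    exact congrArg DFunLike.coe (h.derivation_ext dA hD₃ hE hroot)
  · rintro D ⟨hD₁, hD₂, hD₃⟩
    refine (h.derivation_apply_root dA hP (.ofAddLeibniz D hD₁ hD₂) hD₃).trans ?_
    unfold IsAdjoinRoot.derivationValueAtRoot
    rw [dA.aeval_polyMapCoeffs]
    rfl
end

section
/- Let V be a vector space and ρ: (ℚ_p, +) → GL(V) a group homomorphism (a representation of the additive group of ℚ_p). Let v ∈ V and n ∈ ℕ be such that ρ(a)·v = v for all a ∈ pⁿℤ_p. Let x ∈ ℚ_p, let m ∈ ℕ be such that pᵐ·x ∈ ℤ_p, and let N ≥ m + n. Then ∑_{i=0}^{p^N − 1} ρ(i·p^{−m})·(v − ρ(x)·v) = 0. -/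
private lemma aux_mul_period {V : Type*} [AddCommGroup V] (f : ℕ → V) (T : ℕ)
    (hf : ∀ i, f (i + T) = f i) : ∀ i j, f (i + T * j) = f i := by
  intro i j
  induction j with
  | zero => simp
  | succ k ih =>
      have h : i + T * (k + 1) = (i + T * k) + T := by ring
      rw [h, hf, ih]

private lemma aux_shift_sum {V : Type*} [AddCommGroup V] (f : ℕ → V) (T M : ℕ)
    (hf : ∀ i, f (i + T) = f i) (hTM : T ∣ M) (c : ℕ) :
    ∑ i ∈ Finset.range M, f (i + c) = ∑ i ∈ Finset.range M, f i := by
  induction c with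
  | zero => simp
  | succ c ih =>
      obtain ⟨k, hk⟩ := hTM
      have h1 : ∑ i ∈ Finset.range (M + 1), f (i + c)
          = (∑ i ∈ Finset.range M, f ((i + 1) + c)) + f (0 + c) :=
        Finset.sum_range_succ' (fun i => f (i + c)) M
      have h2 : ∑ i ∈ Finset.range (M + 1), f (i + c)
          = (∑ i ∈ Finset.range M, f (i + c)) + f (M + c) :=
        Finset.sum_range_succ (fun i => f (i + c)) M
      have h4 : (∑ i ∈ Finset.range M, f ((i + 1) + c))
          = ∑ i ∈ Finset.range M, f (i + (c + 1)) := by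
        refine Finset.sum_congr rfl fun i _ => ?_
        congr 1; ring
      have hMc : f (M + c) = f c := by
        have : M + c = c + T * k := by omega
        rw [this, aux_mul_period f T hf]
      rw [h4] at h1
      simp only [Nat.zero_add] at h1
      have h5 : (∑ i ∈ Finset.range M, f (i + (c + 1))) + f c
          = (∑ i ∈ Finset.range M, f (i + c)) + f c := by
        rw [← h1, h2, hMc]
      have := add_right_cancel h5
      rw [this, ih]

theorem stmt_15 (p : ℕ) [Fact p.Prime]
    (K : Type*) [Field K] (V : Type*) [AddCommGroup V] [Module K V]
    (ρ : ℚ_[p] → Module.End K V) (hρ0 : ρ 0 = 1)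
    (hρ : ∀ a b : ℚ_[p], ρ (a + b) = ρ a * ρ b)
    (v : V) (n : ℕ)
    (hv : ∀ b : ℤ_[p], ρ ((p : ℚ_[p]) ^ n * (b : ℚ_[p])) v = v)
    (x : ℚ_[p]) (m : ℕ) (hm : ‖(p : ℚ_[p]) ^ m * x‖ ≤ 1)
    (N : ℕ) (hN : m + n ≤ N) :
    ∑ i ∈ Finset.range (p ^ N),
      ρ ((i : ℚ_[p]) * (p : ℚ_[p]) ^ (-(m : ℤ))) (v - ρ x v) = 0 := by
  have hp : (p : ℚ_[p]) ≠ 0 := by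
    exact_mod_cast Nat.cast_ne_zero.mpr (Fact.out : p.Prime).ne_zero
  set f : ℕ → V := fun i => ρ ((i : ℚ_[p]) * (p : ℚ_[p]) ^ (-(m : ℤ))) v with hf
  -- the p-adic integer y with p^m x = y
  set z : ℤ_[p] := ⟨(p : ℚ_[p]) ^ m * x, hm⟩ with hz
  set c : ℕ := z.appr (m + n) with hc
  have hkey : ∀ k : ℕ, (p : ℚ_[p]) ^ (m + k) * (p : ℚ_[p]) ^ (-(m : ℤ)) = (p : ℚ_[p]) ^ k := by
    intro k
    rw [← zpow_natCast (p : ℚ_[p]) (m + k), ← zpow_natCast (p : ℚ_[p]) k, ← zpow_add₀ hp]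
    congr 1
    push_cast
    ring
  obtain ⟨t, ht⟩ := Ideal.mem_span_singleton'.mp (PadicInt.appr_spec (m + n) z)
  -- z - c = t * p^(m+n) in ℤ_p
  have hzq : ((z : ℚ_[p]) : ℚ_[p]) - (c : ℚ_[p]) = (t : ℚ_[p]) * (p : ℚ_[p]) ^ (m + n) := by
    have := congrArg (fun w : ℤ_[p] => (w : ℚ_[p])) ht
    push_cast at this ⊢
    linear_combination -this
  -- periodicity
  have hper : ∀ i, f (i + p ^ (m + n)) = f i := by
    intro i
    have harg : ((i + p ^ (m + n) : ℕ) : ℚ_[p]) * (p : ℚ_[p]) ^ (-(m : ℤ))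
        = (i : ℚ_[p]) * (p : ℚ_[p]) ^ (-(m : ℤ)) + (p : ℚ_[p]) ^ n * ((1 : ℤ_[p]) : ℚ_[p]) := by
      push_cast
      linear_combination hkey n
    simp only [hf, harg, hρ, Module.End.mul_apply, hv]
  -- key: each summand is f i - f (i + c)
  have hsummand : ∀ i : ℕ,
      ρ ((i : ℚ_[p]) * (p : ℚ_[p]) ^ (-(m : ℤ))) (v - ρ x v) = f i - f (i + c) := by
    intro i
    rw [map_sub]
    congr 1
    have harg : (i : ℚ_[p]) * (p : ℚ_[p]) ^ (-(m : ℤ)) + x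
        = ((i + c : ℕ) : ℚ_[p]) * (p : ℚ_[p]) ^ (-(m : ℤ)) + (p : ℚ_[p]) ^ n * (t : ℚ_[p]) := by
      have hx : x = ((z : ℚ_[p])) * (p : ℚ_[p]) ^ (-(m : ℤ)) := by
        have : (z : ℚ_[p]) = (p : ℚ_[p]) ^ m * x := rfl
        rw [this, zpow_neg, zpow_natCast]
        field_simp
      rw [hx]
      have hzc : (z : ℚ_[p]) = (c : ℚ_[p]) + (t : ℚ_[p]) * (p : ℚ_[p]) ^ (m + n) := by
        linear_combination hzq
      rw [hzc]
      push_cast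
      linear_combination (t : ℚ_[p]) * hkey n
    have : ρ ((i : ℚ_[p]) * (p : ℚ_[p]) ^ (-(m : ℤ))) (ρ x v)
        = ρ ((i : ℚ_[p]) * (p : ℚ_[p]) ^ (-(m : ℤ)) + x) v := by
      rw [hρ, Module.End.mul_apply]
    rw [this, harg]
    have harg2 : ((i + c : ℕ) : ℚ_[p]) * (p : ℚ_[p]) ^ (-(m : ℤ)) + (p : ℚ_[p]) ^ n * (t : ℚ_[p])
        = ((i + c : ℕ) : ℚ_[p]) * (p : ℚ_[p]) ^ (-(m : ℤ)) + (p : ℚ_[p]) ^ n * ((t : ℤ_[p]) : ℚ_[p]) := rfl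
    rw [harg2, hρ, Module.End.mul_apply, hv]
  calc ∑ i ∈ Finset.range (p ^ N),
        ρ ((i : ℚ_[p]) * (p : ℚ_[p]) ^ (-(m : ℤ))) (v - ρ x v)
      = ∑ i ∈ Finset.range (p ^ N), (f i - f (i + c)) :=
        Finset.sum_congr rfl fun i _ => hsummand i
    _ = (∑ i ∈ Finset.range (p ^ N), f i) - ∑ i ∈ Finset.range (p ^ N), f (i + c) := by
        rw [Finset.sum_sub_distrib]
    _ = 0 := by
        rw [aux_shift_sum f (p ^ (m + n)) (p ^ N) hper (pow_dvd_pow p hN) c, sub_self]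
end
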